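/- (Theorem 1, equation (8)) Let Y^(0), Y^(1), ..., Y^(K) be i.i.d. random trajectories, each a random element of (ℝ^d)^{T+1}, writing Y^(i) = (Y^(i)_0,...,Y^(i)_T). For each τ ∈ {1,...,T} let h_τ : ℝ^d → ℝ^d be a measurable predictor and set ŷ^(i)_{τ|0} := h_τ(Y^(i)_0). Let δ ∈ (0,1), δ̄ := δ/T, p := ⌈(K+1)(1−δ̄)⌉, and for each τ define R^(i)_{τ|0} := ‖Y^(i)_τ − ŷ^(i)_{τ|0}‖ for i = 1,...,K and let C_{τ|0} be the p-th smallest element of the list (R^(1)_{τ|0},...,R^(K)_{τ|0},+∞). Then P(‖Y^(0)_τ − ŷ^(0)_{τ|0}‖ ≤ C_{τ|0} for all τ ∈ {1,...,T}) ≥ 1 − δ. -/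

import Mathlib

open MeasureTheory ProbabilityTheory

/-- The `p`-th smallest element (1-indexed) of the list consisting of the `K` extended-real
scores `R 1, ..., R K` together with `+∞`. -/
noncomputable def conformalBound (K : ℕ) (R : Fin K → EReal) (p : ℕ) : EReal :=
  (@List.insertionSort EReal (· ≤ ·) (Classical.decRel _)
    (((List.finRange K).map R) ++ [⊤])).getD (p - 1) ⊤

/-!
If the test score exceeds the conformal bound, then at least `p` of the `K + 1` i.i.d. scores lie
strictly below the test score. The trajectories are exchangeable, so each of the `K + 1` of them
is in that position with the same probability, while at most `K + 1 - p` of them can be at once.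
Hence the miscoverage probability at each horizon `τ` is at most `(K + 1 - p) / (K + 1) ≤ δ / T`,
and a union bound over `τ = 1, …, T` gives coverage `1 - δ`.
-/

open Finset
open scoped ENNReal

open scoped Classical in
theorem sum_measure_le_mul_measure_univ {X ι : Type*} [MeasurableSpace X] [Fintype ι]
    (μ : Measure X) {S : ι → Set X} (hS : ∀ i, MeasurableSet (S i)) {m : ℕ}
    (hm : ∀ x, #{i | x ∈ S i} ≤ m) : ∑ i, μ (S i) ≤ m * μ Set.univ := by
  calc ∑ i, μ (S i) = ∑ i, ∫⁻ x, (S i).indicator 1 x ∂μ := by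
        simp only [lintegral_indicator_one (hS _)]
    _ = ∫⁻ x, ∑ i, (S i).indicator 1 x ∂μ :=
        (lintegral_finsetSum _ fun i _ => measurable_one.indicator (hS i)).symm
    _ = ∫⁻ x, (#{i | x ∈ S i} : ℝ≥0∞) ∂μ := by
        simp only [Set.indicator_apply, Pi.one_apply, sum_boole]
    _ ≤ ∫⁻ _, (m : ℝ≥0∞) ∂μ := lintegral_mono fun x => Nat.cast_le.mpr (by convert hm x)
    _ = m * μ Set.univ := lintegral_const _

theorem measurePreserving_comp_equiv {ι E : Type*} [Fintype ι] [MeasurableSpace E]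
    (ν : Measure E) [SigmaFinite ν] (e : ι ≃ ι) :
    MeasurePreserving (fun v : ι → E => v ∘ e) (Measure.pi fun _ => ν)
      (Measure.pi fun _ => ν) := by
  convert measurePreserving_piCongrLeft (fun _ : ι => ν) e.symm using 1
  ext v i
  simpa using (MeasurableEquiv.piCongrLeft_apply_apply (β := fun _ => E) e.symm v (e i)).symm

theorem List.succ_le_countP_lt_of_pairwise {α : Type*} [Preorder α] [DecidableLT α]
    {l : List α} (hl : l.Pairwise (· ≤ ·)) {n : ℕ} (hn : n < l.length) {x : α} (hx : l[n] < x) :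
    n + 1 ≤ l.countP (· < x) := by
  have htake : ∀ a ∈ l.take (n + 1), a < x := by
    intro a ha
    obtain ⟨k, hk, rfl⟩ := List.getElem_of_mem ha
    rw [List.length_take] at hk
    rw [List.getElem_take]
    exact (hl.rel_get_of_le (a := ⟨k, by omega⟩) (b := ⟨n, hn⟩)
      (by simp [Fin.le_def]; omega)).trans_lt hx
  calc n + 1 = (l.take (n + 1)).countP (· < x) := by
        rw [List.countP_eq_length.mpr (by simpa using htake), List.length_take]; omega
    _ ≤ l.countP (· < x) := (List.take_sublist _ _).countP_le

theorem le_card_filter_lt_of_conformalBound_lt {K p : ℕ} {R : Fin K → EReal} {x : EReal}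
    (h : conformalBound K R p < x) : p ≤ #{i | R i < x} := by
  obtain rfl | hp := Nat.eq_zero_or_pos p
  · exact Nat.zero_le _
  unfold conformalBound at h
  set S := @List.insertionSort EReal (· ≤ ·) (Classical.decRel _)
    ((List.finRange K).map R ++ [⊤])
  have hn : p - 1 < S.length := by
    by_contra hn
    rw [List.getD_eq_default _ _ (by omega)] at h
    exact not_top_lt h
  rw [List.getD_eq_getElem _ _ hn] at h
  have hcount := List.succ_le_countP_lt_of_pairwise
    (@List.pairwise_insertionSort EReal (· ≤ ·) (Classical.decRel _) _ _ _) hn h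
  rw [(@List.perm_insertionSort EReal (· ≤ ·) (Classical.decRel _) _).countP_eq,
    List.countP_append, List.countP_map] at hcount
  simpa [Nat.sub_add_cancel hp, not_top_lt, Fin.univ_def, Finset.filter, Finset.card,
    List.countP_eq_length_filter, Multiset.filter_coe, Function.comp_def] using hcount

section StrictRank

variable {ι α : Type*} [Fintype ι] [LinearOrder α]

def strictRank (g : ι → α) (i : ι) : ℕ := #{j | g j < g i}

theorem strictRank_comp_equiv (g : ι → α) (e : ι ≃ ι) (i : ι) :
    strictRank (g ∘ e) i = strictRank g (e i) :=
  card_equiv e (by simp)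

theorem card_filter_le_strictRank_le (g : ι → α) (p : ℕ) :
    #{i | p ≤ strictRank g i} ≤ Fintype.card ι - p := by
  classical
  rcases ({i | p ≤ strictRank g i} : Finset ι).eq_empty_or_nonempty with hS | hS
  · simp [hS]
  obtain ⟨i₀, hi₀, hmin⟩ := exists_min_image _ g hS
  have hsub : ({i | p ≤ strictRank g i} : Finset ι) ⊆ ({j | g j < g i₀} : Finset ι)ᶜ :=
    fun j hj => by simpa using hmin j hj
  calc #{i | p ≤ strictRank g i} ≤ #({j | g j < g i₀} : Finset ι)ᶜ := card_le_card hsub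
    _ = Fintype.card ι - strictRank g i₀ := card_compl _
    _ ≤ Fintype.card ι - p := Nat.sub_le_sub_left (by simpa using hi₀) _

variable [TopologicalSpace α] [OrderClosedTopology α] [SecondCountableTopology α]
  [MeasurableSpace α] [OpensMeasurableSpace α]

theorem measurableSet_le_strictRank {E : Type*} [MeasurableSpace E] {s : E → α}
    (hs : Measurable s) (p : ℕ) (i : ι) :
    MeasurableSet {v : ι → E | p ≤ strictRank (s ∘ v) i} := by
  have hrank : Measurable fun v : ι → E => strictRank (s ∘ v) i := by
    simp only [strictRank, card_filter]
    refine Finset.measurable_sum _ fun j _ => Measurable.ite ?_ measurable_const measurable_const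
    exact measurableSet_lt (hs.comp (measurable_pi_apply j)) (hs.comp (measurable_pi_apply i))
  exact hrank measurableSet_Ici

theorem pi_le_strictRank_le {E : Type*} [MeasurableSpace E] (ν : Measure E)
    [IsProbabilityMeasure ν] {s : E → α} (hs : Measurable s) (p : ℕ) (i₀ : ι) :
    Measure.pi (fun _ : ι => ν) {v | p ≤ strictRank (s ∘ v) i₀} ≤
      ((Fintype.card ι - p : ℕ) : ℝ≥0∞) / Fintype.card ι := by
  classical
  set S : ι → Set (ι → E) := fun i => {v | p ≤ strictRank (s ∘ v) i}
  have hexch : ∀ i, Measure.pi (fun _ => ν) (S i) = Measure.pi (fun _ => ν) (S i₀) := by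
    intro i
    have hpre : (fun v : ι → E => v ∘ Equiv.swap i₀ i) ⁻¹' S i = S i₀ := by
      ext v
      simp [S, ← Function.comp_assoc, strictRank_comp_equiv]
    rw [← hpre, (measurePreserving_comp_equiv ν _).measure_preimage
      (measurableSet_le_strictRank hs p i).nullMeasurableSet]
  have hsum := sum_measure_le_mul_measure_univ (Measure.pi fun _ => ν)
    (fun i => measurableSet_le_strictRank hs p i) (m := Fintype.card ι - p)
    fun v => by convert card_filter_le_strictRank_le (s ∘ v) p; rfl
  rw [sum_congr rfl fun i _ => hexch i, sum_const, card_univ, nsmul_eq_mul, measure_univ,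
    mul_one] at hsum
  have : Nonempty ι := ⟨i₀⟩
  rw [ENNReal.le_div_iff_mul_le (.inl (by simp)) (.inl (by simp)), mul_comm]
  exact hsum

end StrictRank

theorem measure_conformalBound_lt_le {Ω E : Type*} [MeasurableSpace Ω] [MeasurableSpace E]
    (μ : Measure Ω) [IsProbabilityMeasure μ] {K : ℕ} {Y : Fin (K + 1) → Ω → E}
    (hmeas : ∀ i, Measurable (Y i)) (hindep : iIndepFun Y μ)
    (hident : ∀ i, μ.map (Y i) = μ.map (Y 0)) {s : E → EReal} (hs : Measurable s) (p : ℕ) :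
    μ {ω | conformalBound K (fun i => s (Y i.succ ω)) p < s (Y 0 ω)} ≤
      ((K + 1 - p : ℕ) : ℝ≥0∞) / (K + 1 : ℕ) := by
  set S := {v : Fin (K + 1) → E | p ≤ strictRank (s ∘ v) 0}
  have hlaw : μ.map (fun ω i => Y i ω) = Measure.pi fun _ => μ.map (Y 0) := by
    rw [hindep.map_fun_eq_pi_map fun i => (hmeas i).aemeasurable]
    simp_rw [hident]
  have hsub : {ω | conformalBound K (fun i => s (Y i.succ ω)) p < s (Y 0 ω)} ⊆
      (fun ω i => Y i ω) ⁻¹' S := fun ω hω =>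
    (le_card_filter_lt_of_conformalBound_lt hω).trans <|
      card_le_card_of_injOn Fin.succ (fun i hi => by simpa using hi) (Fin.succ_injective _).injOn
  have : IsProbabilityMeasure (μ.map (Y 0)) :=
    Measure.isProbabilityMeasure_map (hmeas 0).aemeasurable
  calc _ ≤ μ ((fun ω i => Y i ω) ⁻¹' S) := measure_mono hsub
    _ = Measure.pi (fun _ => μ.map (Y 0)) S := by
        rw [← hlaw, Measure.map_apply (measurable_pi_lambda _ hmeas)
          (measurableSet_le_strictRank hs p 0)]
    _ ≤ _ := by
        simpa only [Fintype.card_fin] using pi_le_strictRank_le (μ.map (Y 0)) hs p (0 : Fin (K + 1))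

theorem natCast_sub_div_le_ofReal {n p : ℕ} {ε : ℝ} (hε : 0 ≤ ε) (hp : n * (1 - ε) ≤ p) :
    ((n - p : ℕ) : ℝ≥0∞) / n ≤ ENNReal.ofReal ε := by
  have hreal : ((n - p : ℕ) : ℝ) ≤ ε * n := by
    rcases le_total p n with hpn | hnp
    · rw [Nat.cast_sub hpn]; linarith
    · rw [Nat.sub_eq_zero_of_le hnp, Nat.cast_zero]; positivity
  refine ENNReal.div_le_of_le_mul ?_
  rw [← ENNReal.ofReal_natCast, ← ENNReal.ofReal_natCast, ← ENNReal.ofReal_mul hε]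
  exact ENNReal.ofReal_le_ofReal hreal

theorem natCast_mul_ofReal_div_le (n : ℕ) {δ : ℝ} (hδ : 0 ≤ δ) :
    (n : ℝ≥0∞) * ENNReal.ofReal (δ / n) ≤ ENNReal.ofReal δ := by
  rw [← ENNReal.ofReal_natCast, ← ENNReal.ofReal_mul n.cast_nonneg]
  refine ENNReal.ofReal_le_ofReal ?_
  rcases Nat.eq_zero_or_pos n with rfl | hn
  · simpa using hδ
  · rw [mul_div_cancel₀ _ (by positivity)]

theorem ofReal_one_sub_le_measure {Ω : Type*} [MeasurableSpace Ω] {μ : Measure Ω}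
    [IsProbabilityMeasure μ] {s : Set Ω} {δ : ℝ} (hδ : 0 ≤ δ) (h : μ sᶜ ≤ ENNReal.ofReal δ) :
    ENNReal.ofReal (1 - δ) ≤ μ s := by
  rw [ENNReal.ofReal_sub _ hδ, ENNReal.ofReal_one, tsub_le_iff_right]
  calc 1 = μ Set.univ := measure_univ.symm
    _ ≤ μ s + μ sᶜ := measure_univ_le_add_compl s
    _ ≤ μ s + ENNReal.ofReal δ := by gcongr

/-- **Theorem 1, equation (8): simultaneous validity of all `τ`-step-ahead prediction
regions computed at time `0`.** With `δ̄ := δ/T` and `p = ⌈(K+1)(1-δ̄)⌉`, the predictions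
`ŷ_{τ|0} i = h τ (Y i 0)` and conformal bounds `C τ` (the `p`-th smallest element of the
nonconformity scores of the validation trajectories together with `+∞`) satisfy
`P(∀ τ ∈ {1,...,T}, ‖Y 0 τ - ŷ_{τ|0} 0‖ ≤ C τ) ≥ 1 - δ`. -/
theorem conformal_multistep_coverage
    {Ω : Type*} [MeasurableSpace Ω] (μ : Measure Ω) [IsProbabilityMeasure μ]
    (d T K : ℕ)
    (Y : Fin (K + 1) → Ω → (Fin (T + 1) → EuclideanSpace ℝ (Fin d)))
    (hmeas : ∀ i, Measurable (Y i))
    (hindep : iIndepFun Y μ)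
    (hident : ∀ i, Measure.map (Y i) μ = Measure.map (Y 0) μ)
    (h : ℕ → EuclideanSpace ℝ (Fin d) → EuclideanSpace ℝ (Fin d))
    (hmeash : ∀ τ, Measurable (h τ))
    (δ : ℝ) (hδ : δ ∈ Set.Ioo (0 : ℝ) 1)
    (p : ℕ) (hp : p = ⌈((K : ℝ) + 1) * (1 - δ / T)⌉₊)
    (C : ℕ → Ω → EReal)
    (hC : ∀ τ, 1 ≤ τ → ∀ (hτT : τ ≤ T) (ω : Ω), C τ ω =
      conformalBound K
        (fun i => ((‖Y i.succ ω ⟨τ, by omega⟩ - h τ (Y i.succ ω ⟨0, by omega⟩)‖ : ℝ) : EReal))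
        p) :
    ENNReal.ofReal (1 - δ) ≤
      μ {ω | ∀ τ, 1 ≤ τ → ∀ hτT : τ ≤ T,
        ((‖Y 0 ω ⟨τ, by omega⟩ - h τ (Y 0 ω ⟨0, by omega⟩)‖ : ℝ) : EReal) ≤ C τ ω} := by
  set score : Fin T → (Fin (T + 1) → EuclideanSpace ℝ (Fin d)) → EReal :=
    fun τ y => ((‖y τ.succ - h (τ + 1) (y 0)‖ : ℝ) : EReal)
  have hscore : ∀ τ, Measurable (score τ) := fun τ => measurable_coe_real_ereal.comp
    ((measurable_pi_apply τ.succ).sub ((hmeash _).comp (measurable_pi_apply 0))).norm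
  have hbad : ∀ τ : Fin T, μ {ω | C (τ + 1) ω < score τ (Y 0 ω)} ≤ ENNReal.ofReal (δ / T) := by
    intro τ
    have hCτ : ∀ ω, C (τ + 1) ω = conformalBound K (fun i => score τ (Y i.succ ω)) p :=
      hC _ τ.val.succ_pos τ.isLt
    simp only [hCτ]
    refine (measure_conformalBound_lt_le μ hmeas hindep hident (hscore τ) p).trans
      (natCast_sub_div_le_ofReal (div_nonneg hδ.1.le T.cast_nonneg) ?_)
    rw [hp]; push_cast; exact Nat.le_ceil _
  refine ofReal_one_sub_le_measure hδ.1.le ?_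
  calc _ ≤ μ (⋃ τ : Fin T, {ω | C (τ + 1) ω < score τ (Y 0 ω)}) := by
        refine measure_mono fun ω hω => ?_
        simp only [Set.mem_compl_iff, Set.mem_ofPred_eq, not_forall, not_le] at hω
        obtain ⟨τ, hτ₁, hτT, hlt⟩ := hω
        obtain ⟨τ, rfl⟩ : ∃ τ' : ℕ, τ = τ' + 1 := ⟨τ - 1, by omega⟩
        exact Set.mem_iUnion.mpr ⟨⟨τ, hτT⟩, hlt⟩
    _ ≤ ∑ τ : Fin T, ENNReal.ofReal (δ / T) :=
        (measure_iUnion_fintype_le _ _).trans (sum_le_sum fun τ _ => hbad τ)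
    _ = T * ENNReal.ofReal (δ / T) := by simp
    _ ≤ ENNReal.ofReal δ := natCast_mul_ofReal_div_le T hδ.1.le
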